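/- Let 0 < s₁ < s₂. Then (closure of A_{s₁}) ∖ ∂P ⊂ interior of A_{s₂}, where closure, interior, and the boundary ∂P are taken in ℝⁿ. Moreover, ⋃_{s>0} A_s = {y ∈ P : u̇₀(y) ≠ (u̇₀)**(y)}, where (u̇₀)** is the biconjugate (convex envelope) of u̇₀ over P. -/

import Mathlib

noncomputable section

open Set MeasureTheory Topology Filter
open scoped RealInnerProductSpace Pointwise

/-- Euclidean space ℝⁿ. -/
abbrev E (n : ℕ) := EuclideanSpace ℝ (Fin n)

/-- The affine functions `l_k(y) = ⟨y, v_k⟩ − λ_k` defining the polytope. -/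
def lfun {n d : ℕ} (v : Fin d → E n) (lam : Fin d → ℝ) (k : Fin d) (y : E n) : ℝ :=
  ⟪y, v k⟫ - lam k

/-- The polytope `P = ⋂_k {l_k ≥ 0}`. -/
def Pset {n d : ℕ} (v : Fin d → E n) (lam : Fin d → ℝ) : Set (E n) :=
  {y | ∀ k, 0 ≤ lfun v lam k y}

/-- Guillemin's canonical symplectic potential `u_G = Σ l_k log l_k`
(note `Real.log 0 = 0`, so `t log t = 0` at `t = 0`). -/
def uG {n d : ℕ} (v : Fin d → E n) (lam : Fin d → ℝ) (y : E n) : ℝ :=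
  ∑ k, lfun v lam k y * Real.log (lfun v lam k y)

/-- The biconjugate (convex envelope) over `P`:
`g**(y) = sup {a(y) : a affine on ℝⁿ, a ≤ g on P}`. -/
def biconj {n : ℕ} (P : Set (E n)) (g : E n → ℝ) (y : E n) : ℝ :=
  sSup {r : ℝ | ∃ (a : E n →L[ℝ] ℝ) (c : ℝ), (∀ z ∈ P, a z + c ≤ g z) ∧ r = a y + c}

/-- The subdifferential of `g : P → ℝ` at `y`, relative to `P`. -/
def subdiff {n : ℕ} (P : Set (E n)) (g : E n → ℝ) (y : E n) : Set (E n) :=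
  {w | ∀ z ∈ P, g y + ⟪w, z - y⟫ ≤ g z}

/-- The subdifferential of a finite (convex) function on all of ℝⁿ. -/
def subdiffR {n : ℕ} (f : E n → ℝ) (x : E n) : Set (E n) :=
  {w | ∀ z, f x + ⟪w, z - x⟫ ≤ f z}

/-- The total subdifferential of `ψ(s,x)` at `(s,x)`, a subset of `ℝ × ℝⁿ = ℝ^{n+1}`. -/
def subdiffT {n : ℕ} (ψ : ℝ → E n → ℝ) (s : ℝ) (x : E n) : Set (ℝ × E n) :=
  {w | ∀ t z, ψ s x + w.1 * (t - s) + ⟪w.2, z - x⟫ ≤ ψ t z}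

/-- The set of reachable partial `x`-subgradients `γ_x ψ(s,x)`. -/
def reachable {n : ℕ} (ψ : ℝ → E n → ℝ) (s : ℝ) (x : E n) : Set (E n) :=
  {w | ∃ xk : ℕ → E n, (∀ k, DifferentiableAt ℝ (ψ s) (xk k)) ∧
    Tendsto xk atTop (𝓝 x) ∧
    Tendsto (fun k => gradient (ψ s) (xk k)) atTop (𝓝 w)}

/-- `P` is a compact Delzant polytope with nonempty interior, cut out by the `l_k`,
with all facets of dimension `n−1`, and every vertex lying on exactly `n` of the
hyperplanes `{l_k = 0}` with linearly independent normals. -/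
def GoodPolytope {n d : ℕ} (v : Fin d → E n) (lam : Fin d → ℝ) (P : Set (E n)) : Prop :=
  P = Pset v lam ∧ IsCompact P ∧ (interior P).Nonempty ∧
  (∀ k, Module.finrank ℝ (affineSpan ℝ (P ∩ {y | lfun v lam k y = 0})).direction = n - 1) ∧
  (∀ p ∈ Set.extremePoints ℝ P, ∃ K : Finset (Fin d), K.card = n ∧
    (∀ k, k ∈ K ↔ lfun v lam k p = 0) ∧ LinearIndependent ℝ (fun k : K => v ↑k))

/-- The Cauchy data: `u₀ − u_G` extends smoothly to a neighborhood of `P`, `u₀` is convex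
on `P`, smooth with positive definite Hessian on `int P`; `u̇₀` extends smoothly to a
neighborhood of `P`. -/
def GoodData {n d : ℕ} (v : Fin d → E n) (lam : Fin d → ℝ) (P : Set (E n))
    (u₀ udot : E n → ℝ) : Prop :=
  (∃ U : Set (E n), IsOpen U ∧ P ⊆ U ∧ ∃ F : E n → ℝ, ContDiffOn ℝ (⊤ : ℕ∞) F U ∧
    ∀ y ∈ P, u₀ y = uG v lam y + F y) ∧
  ConvexOn ℝ P u₀ ∧
  ContDiffOn ℝ (⊤ : ℕ∞) u₀ (interior P) ∧
  (∀ y ∈ interior P, ∀ w : E n, w ≠ 0 → 0 < ⟪(fderiv ℝ (gradient u₀) y) w, w⟫) ∧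
  (∃ U : Set (E n), IsOpen U ∧ P ⊆ U ∧ ContDiffOn ℝ (⊤ : ℕ∞) udot U)

/-!
Let `x` be an interior point of `P` that is not interior to `A_{s₂}`. Points where `u_{s₂}`
agrees with its convex envelope accumulate at `x`; their approximate subgradients are bounded,
and a limit of them is a subgradient of `u_{s₂}` at `x`. Hence the Hessian of `u_{s₂}` at `x` is
positive semidefinite, and since `u_{s₁} = t u_{s₂} + (1 - t) u₀` with `t = s₁ / s₂ < 1`, the
Hessian of `u_{s₁}` is positive definite near `x`: `u_{s₁}` is convex on a ball around `x`.
Outside that ball, strict convexity of `u₀` keeps `u_{s₁}` a definite amount above the plane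
`t (supporting plane of u_{s₂}) + (1 - t) (tangent plane of u₀)` at `x`. So for `y` near `x` the
tangent plane of `u_{s₁}` at `y` supports `u_{s₁}` on all of `P`, and `y ∉ A_{s₁}`.

For the union: `u₀ = u₀**`, and the envelope is superadditive, so `u̇₀ = u̇₀**` forces
`u_s = u_s**`. Conversely `u_s** ≤ max u₀ + s u̇₀**`, which drops below `u_s` at a point where
`u̇₀** < u̇₀` once `s` is large.
-/

theorem strictConvexOn_of_hasDerivWithinAt2_pos {D : Set ℝ} (hD : Convex ℝ D) {f f' f'' : ℝ → ℝ}
    (hf : ContinuousOn f D) (hf' : ∀ x ∈ interior D, HasDerivWithinAt f (f' x) (interior D) x)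
    (hf'' : ∀ x ∈ interior D, HasDerivWithinAt f' (f'' x) (interior D) x)
    (hf''₀ : ∀ x ∈ interior D, 0 < f'' x) : StrictConvexOn ℝ D f := by
  refine StrictMonoOn.strictConvexOn_of_deriv hD hf
    (StrictMonoOn.congr ?_ (deriv_eqOn isOpen_interior hf').symm)
  exact strictMonoOn_of_hasDerivWithinAt_pos (f' := f'') hD.interior
    (fun x hx => (hf'' x hx).continuousWithinAt) (by rwa [interior_interior])
    (by rwa [interior_interior])

theorem IsLocalMin.nonneg_of_hasDerivAt_of_hasDerivAt {g g' : ℝ → ℝ} {a g'' : ℝ}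
    (hmin : IsLocalMin g a) (hg : ∀ᶠ t in 𝓝 a, HasDerivAt g (g' t) t)
    (hg' : HasDerivAt g' g'' a) : 0 ≤ g'' := by
  -- If `g'' < 0`, the second-derivative test makes `a` a local maximum as well, so `g` is
  -- locally constant and `g'' = 0`.
  by_contra! hneg
  have hmax : IsLocalMax g a := by
    refine isLocalMax_of_deriv_deriv_neg ?_ ?_ hg.self_of_nhds.continuousAt
    · have hderiv : deriv g =ᶠ[𝓝 a] g' := hg.mono fun t ht => ht.deriv
      rwa [hderiv.deriv_eq, hg'.deriv]
    · rw [hg.self_of_nhds.deriv]; exact hmin.hasDerivAt_eq_zero hg.self_of_nhds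
  have hconst : g =ᶠ[𝓝 a] fun _ => g a :=
    (hmin.and hmax).mono fun t ht => le_antisymm ht.2 ht.1
  have hzero : (fun _ => 0) =ᶠ[𝓝 a] g' := by
    filter_upwards [hconst.eventuallyEq_nhds, hg] with t ht hgt
    exact ((hasDerivAt_const t (g a)).congr_of_eventuallyEq ht).unique hgt
  exact hneg.ne ((hg'.congr_of_eventuallyEq hzero).unique (hasDerivAt_const a 0))

section Line

variable {n : ℕ} {ψ : E n → ℝ} {y v : E n} {τ : ℝ}

theorem hasDerivAt_comp_add_smul (h : DifferentiableAt ℝ ψ (y + τ • v)) :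
    HasDerivAt (fun t : ℝ => ψ (y + t • v)) ⟪gradient ψ (y + τ • v), v⟫ τ := by
  have hγ : HasDerivAt (fun t : ℝ => y + t • v) v τ := by
    simpa using ((hasDerivAt_id τ).smul_const v).const_add y
  simpa [Function.comp_def] using h.hasGradientAt.hasFDerivAt.comp_hasDerivAt τ hγ

theorem hasDerivAt_inner_gradient_comp_add_smul
    (h : DifferentiableAt ℝ (gradient ψ) (y + τ • v)) :
    HasDerivAt (fun t : ℝ => ⟪gradient ψ (y + t • v), v⟫)
      ⟪fderiv ℝ (gradient ψ) (y + τ • v) v, v⟫ τ := by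
  have hγ : HasDerivAt (fun t : ℝ => y + t • v) v τ := by
    simpa using ((hasDerivAt_id τ).smul_const v).const_add y
  simpa using (h.hasFDerivAt.comp_hasDerivAt τ hγ).inner ℝ (hasDerivAt_const τ v)

theorem ContDiffAt.contDiffAt_gradient {m k : WithTop ℕ∞} (h : ContDiffAt ℝ k ψ y)
    (hmk : m + 1 ≤ k) :
    ContDiffAt ℝ m (gradient ψ) y :=
  (InnerProductSpace.toDual ℝ (E n)).symm.contDiff.contDiffAt.comp y (h.fderiv_right hmk)

theorem ContDiffAt.differentiableAt_gradient (h : ContDiffAt ℝ 2 ψ y) :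
    DifferentiableAt ℝ (gradient ψ) y :=
  (h.contDiffAt_gradient (m := 1) (by norm_num)).differentiableAt one_ne_zero

theorem tendsto_add_smul_nhds_zero (y v : E n) :
    Tendsto (fun t : ℝ => y + t • v) (𝓝 0) (𝓝 y) :=
  (continuous_const.add (continuous_id.smul continuous_const)).tendsto' 0 y (by simp)

end Line

section Hessian

variable {n : ℕ}

theorem add_inner_gradient_le_of_hessian_nonneg_on_segment {ψ : E n → ℝ} {y z : E n}
    (hψ : ∀ p ∈ segment ℝ y z, ContDiffAt ℝ 2 ψ p)
    (hH : ∀ p ∈ segment ℝ y z, 0 ≤ ⟪fderiv ℝ (gradient ψ) p (z - y), z - y⟫) :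
    ψ y + ⟪gradient ψ y, z - y⟫ ≤ ψ z := by
  have hγ : MapsTo (fun τ : ℝ => y + τ • (z - y)) (Icc 0 1) (segment ℝ y z) := by
    rw [segment_eq_image']; exact mapsTo_image _ _
  have hint : ∀ τ ∈ interior (Icc (0:ℝ) 1), y + τ • (z - y) ∈ segment ℝ y z :=
    fun τ hτ => hγ (interior_subset hτ)
  have hconv : ConvexOn ℝ (Icc 0 1) fun τ : ℝ => ψ (y + τ • (z - y)) := by
    refine convexOn_of_hasDerivWithinAt2_nonneg (convex_Icc 0 1) ?_
      (fun τ hτ => (hasDerivAt_comp_add_smul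
        ((hψ _ (hint τ hτ)).differentiableAt two_ne_zero)).hasDerivWithinAt)
      (fun τ hτ => (hasDerivAt_inner_gradient_comp_add_smul
        (hψ _ (hint τ hτ)).differentiableAt_gradient).hasDerivWithinAt)
      (fun τ hτ => hH _ (hint τ hτ))
    exact (continuousOn_of_forall_continuousAt fun p hp => (hψ p hp).continuousAt).comp
      (by fun_prop) hγ
  have h0 := hasDerivAt_comp_add_smul (τ := 0) (v := z - y)
    (by simpa using (hψ y (left_mem_segment ℝ y z)).differentiableAt two_ne_zero)
  simp only [zero_smul, add_zero] at h0
  have := hconv.le_slope_of_hasDerivAt (left_mem_Icc.2 zero_le_one)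
    (right_mem_Icc.2 zero_le_one) zero_lt_one h0
  simp only [slope_def_field, zero_smul, add_zero, one_smul, add_sub_cancel, sub_zero,
    div_one] at this
  linarith

theorem add_inner_gradient_lt_of_hessian_pos_on_openSegment {ψ : E n → ℝ} {y z : E n}
    (hy : DifferentiableAt ℝ ψ y) (hc : ContinuousOn ψ (segment ℝ y z))
    (hψ : ∀ p ∈ openSegment ℝ y z, ContDiffAt ℝ 2 ψ p)
    (hH : ∀ p ∈ openSegment ℝ y z, 0 < ⟪fderiv ℝ (gradient ψ) p (z - y), z - y⟫) :
    ψ y + ⟪gradient ψ y, z - y⟫ < ψ z := by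
  have hγ : MapsTo (fun τ : ℝ => y + τ • (z - y)) (Icc 0 1) (segment ℝ y z) := by
    rw [segment_eq_image']; exact mapsTo_image _ _
  have hint : ∀ τ ∈ interior (Icc (0:ℝ) 1), y + τ • (z - y) ∈ openSegment ℝ y z := by
    rw [interior_Icc, openSegment_eq_image']; exact fun τ hτ => mem_image_of_mem _ hτ
  have hconv : StrictConvexOn ℝ (Icc 0 1) fun τ : ℝ => ψ (y + τ • (z - y)) := by
    refine strictConvexOn_of_hasDerivWithinAt2_pos (convex_Icc 0 1) (hc.comp (by fun_prop) hγ)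
      (fun τ hτ => (hasDerivAt_comp_add_smul
        ((hψ _ (hint τ hτ)).differentiableAt two_ne_zero)).hasDerivWithinAt)
      (fun τ hτ => (hasDerivAt_inner_gradient_comp_add_smul
        (hψ _ (hint τ hτ)).differentiableAt_gradient).hasDerivWithinAt)
      (fun τ hτ => hH _ (hint τ hτ))
  have h0 := hasDerivAt_comp_add_smul (τ := 0) (v := z - y) (by simpa using hy)
  simp only [zero_smul, add_zero] at h0
  have := hconv.lt_slope_of_hasDerivAt (left_mem_Icc.2 zero_le_one)
    (right_mem_Icc.2 zero_le_one) zero_lt_one h0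
  simp only [slope_def_field, zero_smul, add_zero, one_smul, add_sub_cancel, sub_zero,
    div_one] at this
  linarith

theorem isLocalMin_comp_add_smul_of_mem_subdiff {P : Set (E n)} {ψ : E n → ℝ} {x w : E n}
    (hx : x ∈ interior P) (hw : w ∈ subdiff P ψ x) (v : E n) :
    IsLocalMin (fun t : ℝ => ψ (x + t • v) - t * ⟪w, v⟫) 0 := by
  filter_upwards [(tendsto_add_smul_nhds_zero x v).eventually (mem_interior_iff_mem_nhds.1 hx)]
    with t ht
  have := hw _ ht
  rw [add_sub_cancel_left, real_inner_smul_right] at this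
  simp only [zero_smul, add_zero, zero_mul, sub_zero]
  linarith

theorem gradient_eq_of_mem_subdiff {P : Set (E n)} {ψ : E n → ℝ} {x w : E n}
    (hx : x ∈ interior P) (hψ : DifferentiableAt ℝ ψ x) (hw : w ∈ subdiff P ψ x) :
    gradient ψ x = w := by
  refine ext_inner_right ℝ fun v => ?_
  have hd := (hasDerivAt_comp_add_smul (τ := 0) (v := v) (by simpa using hψ)).sub
    (hasDerivAt_mul_const ⟪w, v⟫)
  simpa [sub_eq_zero] using
    (isLocalMin_comp_add_smul_of_mem_subdiff hx hw v).hasDerivAt_eq_zero hd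

theorem inner_hessian_nonneg_of_mem_subdiff {P : Set (E n)} {ψ : E n → ℝ} {x w : E n}
    (hx : x ∈ interior P) (hψ : ContDiffAt ℝ 2 ψ x) (hw : w ∈ subdiff P ψ x) (v : E n) :
    0 ≤ ⟪fderiv ℝ (gradient ψ) x v, v⟫ := by
  refine (isLocalMin_comp_add_smul_of_mem_subdiff hx hw v).nonneg_of_hasDerivAt_of_hasDerivAt
    (g' := fun t => ⟪gradient ψ (x + t • v), v⟫ - ⟪w, v⟫) ?_ ?_
  · filter_upwards [(tendsto_add_smul_nhds_zero x v).eventually (hψ.eventually (by simp))]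
      with t ht
    exact (hasDerivAt_comp_add_smul (ht.differentiableAt two_ne_zero)).sub
      (hasDerivAt_mul_const _)
  · simpa using (hasDerivAt_inner_gradient_comp_add_smul (τ := 0) (v := v)
      (by simpa using hψ.differentiableAt_gradient)).sub_const ⟪w, v⟫

theorem gradient_const_mul_add_const_mul {φ f : E n → ℝ} {x : E n} (a b : ℝ)
    (hφ : DifferentiableAt ℝ φ x) (hf : DifferentiableAt ℝ f x) :
    gradient (fun z => a * φ z + b * f z) x = a • gradient φ x + b • gradient f x := by
  rw [gradient, fderiv_fun_add (hφ.const_mul a) (hf.const_mul b), fderiv_const_mul hφ,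
    fderiv_const_mul hf]
  simp [gradient]

theorem hessian_const_mul_add_const_mul {φ f : E n → ℝ} {x : E n} (a b : ℝ)
    (hφ : ContDiffAt ℝ 2 φ x) (hf : ContDiffAt ℝ 2 f x) :
    fderiv ℝ (gradient fun z => a * φ z + b * f z) x
      = a • fderiv ℝ (gradient φ) x + b • fderiv ℝ (gradient f) x := by
  have hgrad : (gradient fun z => a * φ z + b * f z)
      =ᶠ[𝓝 x] fun z => a • gradient φ z + b • gradient f z := by
    filter_upwards [hφ.eventually (by simp), hf.eventually (by simp)] with z hφz hfz
    exact gradient_const_mul_add_const_mul a b (hφz.differentiableAt two_ne_zero)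
      (hfz.differentiableAt two_ne_zero)
  have hφ' := hφ.differentiableAt_gradient
  have hf' := hf.differentiableAt_gradient
  rw [hgrad.fderiv_eq, fderiv_fun_add (f := fun z => a • gradient φ z)
      (g := fun z => b • gradient f z) (hφ'.const_smul a) (hf'.const_smul b),
    fderiv_fun_const_smul hφ', fderiv_fun_const_smul hf']

end Hessian

section QuadraticForm

variable {F : Type*} [NormedAddCommGroup F] [InnerProductSpace ℝ F] [FiniteDimensional ℝ F]

theorem exists_pos_mul_norm_sq_le_inner (A : F →L[ℝ] F) (hA : ∀ v ≠ 0, 0 < ⟪A v, v⟫) :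
    ∃ ε > 0, ∀ v, ε * ‖v‖ ^ 2 ≤ ⟪A v, v⟫ := by
  rcases subsingleton_or_nontrivial F with hF | hF
  · exact ⟨1, one_pos, fun v => by simp [Subsingleton.elim v 0]⟩
  obtain ⟨e, he, hmin⟩ := (isCompact_sphere (0 : F) 1).exists_isMinOn
    (NormedSpace.sphere_nonempty.2 zero_le_one)
    (show Continuous fun v => ⟪A v, v⟫ from A.continuous.inner continuous_id).continuousOn
  have he1 : ‖e‖ = 1 := by simpa using he
  refine ⟨⟪A e, e⟫, hA e (by rintro rfl; simp at he1), fun v => ?_⟩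
  rcases eq_or_ne v 0 with rfl | hv
  · simp
  have hv' : 0 < ‖v‖ := norm_pos_iff.2 hv
  have : ⟪A e, e⟫ ≤ ⟪A (‖v‖⁻¹ • v), ‖v‖⁻¹ • v⟫ :=
    hmin (show ‖v‖⁻¹ • v ∈ Metric.sphere (0 : F) 1 by simp [norm_smul, hv'.ne'])
  simp only [map_smul, real_inner_smul_left, real_inner_smul_right] at this
  calc ⟪A e, e⟫ * ‖v‖ ^ 2 ≤ ‖v‖⁻¹ * (‖v‖⁻¹ * ⟪A v, v⟫) * ‖v‖ ^ 2 := by gcongr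
    _ = ⟪A v, v⟫ := by field_simp

theorem eventually_inner_nonneg_of_continuousAt {X : Type*} [TopologicalSpace X]
    {H : X → F →L[ℝ] F} {x : X} (hH : ContinuousAt H x) (hx : ∀ v ≠ 0, 0 < ⟪H x v, v⟫) :
    ∀ᶠ y in 𝓝 x, ∀ v, 0 ≤ ⟪H y v, v⟫ := by
  obtain ⟨ε, hε, hεv⟩ := exists_pos_mul_norm_sq_le_inner (H x) hx
  have hlim : Tendsto (fun y => ‖H y - H x‖) (𝓝 x) (𝓝 0) := by
    simpa using (hH.sub (continuousAt_const (y := H x))).norm.tendsto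
  filter_upwards [hlim.eventually (gt_mem_nhds hε)] with y hy v
  have hdiff : ⟪(H x - H y) v, v⟫ ≤ ‖H y - H x‖ * ‖v‖ ^ 2 :=
    calc ⟪(H x - H y) v, v⟫ ≤ ‖(H x - H y) v‖ * ‖v‖ := real_inner_le_norm _ _
      _ ≤ ‖H x - H y‖ * ‖v‖ * ‖v‖ := by gcongr; exact (H x - H y).le_opNorm v
      _ = ‖H y - H x‖ * ‖v‖ ^ 2 := by rw [norm_sub_rev]; ring
  have hsplit : ⟪H y v, v⟫ = ⟪H x v, v⟫ - ⟪(H x - H y) v, v⟫ := by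
    simp [inner_sub_left]
  nlinarith [hεv v, mul_le_mul_of_nonneg_right hy.le (sq_nonneg ‖v‖)]

end QuadraticForm

section Biconjugate

variable {n : ℕ} {P : Set (E n)} {f g : E n → ℝ} {x y : E n}

theorem le_biconj (hy : y ∈ P) {a : ℝ} {w : E n} (h : ∀ z ∈ P, a + ⟪w, z - y⟫ ≤ g z) :
    a ≤ biconj P g y := by
  refine le_csSup ⟨g y, ?_⟩ ⟨innerSL ℝ w, a - ⟪w, y⟫, fun z hz => ?_, by simp⟩
  · rintro r ⟨b, c, hb, rfl⟩
    exact hb y hy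
  · have := h z hz
    rw [inner_sub_right] at this
    simp only [innerSL_apply_apply]
    linarith

theorem biconj_le_self (hy : y ∈ P) {a : ℝ} {w : E n} (h : ∀ z ∈ P, a + ⟪w, z - x⟫ ≤ g z) :
    biconj P g y ≤ g y := by
  apply csSup_le
  · refine ⟨_, innerSL ℝ w, a - ⟪w, x⟫, fun z hz => ?_, rfl⟩
    have := h z hz
    rw [inner_sub_right] at this
    simp only [innerSL_apply_apply]
    linarith
  · rintro r ⟨b, c, hb, rfl⟩
    exact hb y hy

theorem biconj_le_self_of_bddBelow (hy : y ∈ P) (hbdd : BddBelow (g '' P)) :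
    biconj P g y ≤ g y := by
  obtain ⟨m, hm⟩ := hbdd
  exact biconj_le_self hy (x := y) (w := 0) fun z hz => by simpa using hm (mem_image_of_mem g hz)

theorem biconj_eq_of_mem_subdiff (hy : y ∈ P) {w : E n} (hw : w ∈ subdiff P g y) :
    biconj P g y = g y :=
  le_antisymm (biconj_le_self hy hw) (le_biconj hy hw)

theorem exists_add_inner_le_of_lt_biconj (hbdd : BddBelow (g '' P)) {r : ℝ}
    (hr : r < biconj P g y) : ∃ w : E n, ∀ z ∈ P, r + ⟪w, z - y⟫ ≤ g z := by
  obtain ⟨m, hm⟩ := hbdd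
  obtain ⟨_, ⟨b, c, hb, rfl⟩, hlt⟩ := exists_lt_of_lt_csSup
    (by exact ⟨_, 0, m, fun z hz => by simpa using hm (mem_image_of_mem g hz), rfl⟩) hr
  refine ⟨(InnerProductSpace.toDual ℝ (E n)).symm b, fun z hz => ?_⟩
  rw [inner_sub_right, InnerProductSpace.toDual_symm_apply, InnerProductSpace.toDual_symm_apply]
  linarith [hb z hz]

theorem add_mul_biconj_le_biconj (hy : y ∈ P) (hf : BddBelow (f '' P))
    (hg : BddBelow (g '' P)) {s : ℝ} (hs : 0 ≤ s) :
    biconj P f y + s * biconj P g y ≤ biconj P (fun z => f z + s * g z) y := by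
  have hlim : Tendsto (fun ε => biconj P f y + s * biconj P g y - (1 + s) * ε) (𝓝[>] 0)
      (𝓝 (biconj P f y + s * biconj P g y)) :=
    ((continuous_const.sub (continuous_const.mul continuous_id)).tendsto' 0 _
      (by simp)).mono_left nhdsWithin_le_nhds
  refine le_of_tendsto hlim ?_
  filter_upwards [self_mem_nhdsWithin] with ε (hε : 0 < ε)
  obtain ⟨w₁, hw₁⟩ := exists_add_inner_le_of_lt_biconj hf (sub_lt_self (biconj P f y) hε)
  obtain ⟨w₂, hw₂⟩ := exists_add_inner_le_of_lt_biconj hg (sub_lt_self (biconj P g y) hε)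
  refine le_biconj hy (w := w₁ + s • w₂) fun z hz => ?_
  have h₂ := mul_le_mul_of_nonneg_left (hw₂ z hz) hs
  rw [inner_add_left, real_inner_smul_left]
  linarith [hw₁ z hz]

theorem biconj_add_mul_le (hy : y ∈ P) {s : ℝ} (hs : 0 < s)
    (hbdd : BddBelow ((fun z => f z + s * g z) '' P)) {M : ℝ} (hM : ∀ z ∈ P, f z ≤ M) :
    biconj P (fun z => f z + s * g z) y ≤ M + s * biconj P g y := by
  refine forall_lt_imp_le_iff_le_of_dense.1 fun r hr => ?_
  obtain ⟨w, hw⟩ := exists_add_inner_le_of_lt_biconj hbdd hr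
  have : (r - M) / s ≤ biconj P g y := by
    refine le_biconj hy (w := s⁻¹ • w) fun z hz => ?_
    rw [real_inner_smul_left, inv_mul_eq_div, ← add_div, div_le_iff₀ hs]
    linarith [hw z hz, hM z hz]
  rw [div_le_iff₀ hs] at this
  linarith

theorem biconj_eq_self_of_subdiff_nonempty (hP : Convex ℝ P) (hg : ContinuousOn g P)
    (hx : x ∈ interior P) (hsub : ∀ p ∈ interior P, (subdiff P g p).Nonempty) (hy : y ∈ P) :
    biconj P g y = g y := by
  obtain ⟨w, hw⟩ := hsub x hx
  refine le_antisymm (biconj_le_self hy hw) ?_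
  set p : ℝ → E n := fun t => y + t • (x - y)
  have hp : ∀ t ∈ Ioo (0:ℝ) 1, p t ∈ interior P := fun t ht =>
    hP.add_smul_sub_mem_interior hy hx ⟨ht.1, ht.2.le⟩
  -- the subgradient at `p t`, evaluated at `x`, controls its value at `y`
  have hlow : ∀ t ∈ Ioo (0:ℝ) 1, g (p t) - t / (1 - t) * (g x - g (p t)) ≤ biconj P g y := by
    intro t ht
    obtain ⟨wt, hwt⟩ := hsub _ (hp t ht)
    have hxp : x - p t = (1 - t) • (x - y) := by simp only [p]; module
    have hyp : y - p t = (-t) • (x - y) := by simp only [p]; module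
    have h1 := hwt x (interior_subset hx)
    rw [hxp, real_inner_smul_right] at h1
    have h2 : t * ⟪wt, x - y⟫ ≤ t / (1 - t) * (g x - g (p t)) := by
      rw [div_mul_eq_mul_div, le_div_iff₀ (by linarith [ht.2])]
      nlinarith [ht.1]
    have h3 := le_biconj hy (g := g) (a := g (p t) + ⟪wt, y - p t⟫) fun z hz => by
      rw [add_assoc, ← inner_add_right, sub_add_sub_cancel']
      exact hwt z hz
    rw [hyp, real_inner_smul_right] at h3
    linarith
  have hlim : Tendsto (fun t => g (p t) - t / (1 - t) * (g x - g (p t))) (𝓝[>] 0) (𝓝 (g y)) := by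
    have hpt : Tendsto p (𝓝[>] 0) (𝓝[P] y) := by
      refine tendsto_nhdsWithin_iff.2 ⟨?_, ?_⟩
      · simpa [p] using (tendsto_add_smul_nhds_zero y (x - y)).mono_left nhdsWithin_le_nhds
      · filter_upwards [Ioo_mem_nhdsGT one_pos] with t ht using interior_subset (hp t ht)
    have hgp := (hg y hy).tendsto.comp hpt
    have hratio : Tendsto (fun t : ℝ => t / (1 - t)) (𝓝[>] 0) (𝓝 0) := by
      have : Tendsto (fun t : ℝ => t / (1 - t)) (𝓝 0) (𝓝 (0 / (1 - 0))) :=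
        tendsto_id.div (tendsto_const_nhds.sub tendsto_id) (by norm_num)
      simpa using this.mono_left nhdsWithin_le_nhds
    simpa using hgp.sub (hratio.mul (tendsto_const_nhds.sub hgp))
  exact le_of_tendsto hlim (by filter_upwards [Ioo_mem_nhdsGT one_pos] with t ht using hlow t ht)

end Biconjugate

section Subgradients

variable {n : ℕ} {P : Set (E n)} {g : E n → ℝ} {x y : E n}

theorem mul_norm_le_of_add_inner_le {ρ M a : ℝ} {w : E n} (hρ : 0 ≤ ρ)
    (hball : Metric.closedBall y ρ ⊆ P) (hM : ∀ z ∈ P, g z ≤ M)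
    (h : ∀ z ∈ P, a + ⟪w, z - y⟫ ≤ g z) : ρ * ‖w‖ ≤ M - a := by
  rcases eq_or_ne w 0 with rfl | hw
  · have hy := hball (Metric.mem_closedBall_self hρ)
    simpa using (h y hy).trans (hM y hy)
  have hw' : 0 < ‖w‖ := norm_pos_iff.2 hw
  have hz : y + (ρ / ‖w‖) • w ∈ P := hball <| by
    simp [norm_smul, abs_of_nonneg hρ, hw'.ne']
  have := (h _ hz).trans (hM _ hz)
  rw [add_sub_cancel_left, real_inner_smul_right, real_inner_self_eq_norm_sq, div_mul_eq_mul_div,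
    sq, ← mul_assoc, mul_div_assoc, div_self hw'.ne', mul_one] at this
  linarith

theorem subdiff_nonempty_of_tendsto (hg : ContinuousOn g P) (hx : x ∈ P) {y w : ℕ → E n}
    {ε : ℕ → ℝ} (hyP : ∀ k, y k ∈ P) (hy : Tendsto y atTop (𝓝 x)) (hε : Tendsto ε atTop (𝓝 0))
    (hw : Bornology.IsBounded (range w)) (h : ∀ k, ∀ z ∈ P, g (y k) - ε k + ⟪w k, z - y k⟫ ≤ g z) :
    (subdiff P g x).Nonempty := by
  obtain ⟨w₀, -, φ, hφ, hw₀⟩ := tendsto_subseq_of_bounded hw (mem_range_self (f := w))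
  have hyφ := hy.comp hφ.tendsto_atTop
  have hgy : Tendsto (fun j => g (y (φ j))) atTop (𝓝 (g x)) :=
    (hg x hx).tendsto.comp (tendsto_nhdsWithin_iff.2 ⟨hyφ, Eventually.of_forall fun j => hyP _⟩)
  refine ⟨w₀, fun z hz => le_of_tendsto' (x := atTop) ?_ fun j => h (φ j) z hz⟩
  simpa using (hgy.sub (hε.comp hφ.tendsto_atTop)).add (hw₀.inner (tendsto_const_nhds.sub hyφ))

theorem subdiff_nonempty_of_mem_closure (hPc : IsCompact P) (hg : ContinuousOn g P)
    (hx : x ∈ interior P) (hcl : x ∈ closure {y ∈ P | biconj P g y = g y}) :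
    (subdiff P g x).Nonempty := by
  obtain ⟨ρ, hρ, hball⟩ : ∃ ρ > 0, Metric.closedBall x (2 * ρ) ⊆ P := by
    obtain ⟨ε, hε, h⟩ := Metric.nhds_basis_closedBall.mem_iff.1 (mem_interior_iff_mem_nhds.1 hx)
    exact ⟨ε / 2, by positivity, by rwa [mul_div_cancel₀ _ two_ne_zero]⟩
  have himg := hPc.image_of_continuousOn hg
  obtain ⟨M, hM⟩ := himg.bddAbove
  obtain ⟨m, hm⟩ := himg.bddBelow
  have hseq : ∀ k : ℕ, ∃ y ∈ P, dist y x < ρ / (k + 1) ∧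
      ∃ w : E n, ∀ z ∈ P, g y - 1 / (k + 1) + ⟪w, z - y⟫ ≤ g z := by
    intro k
    obtain ⟨y, ⟨hyP, hyg⟩, hyx⟩ := Metric.mem_closure_iff.1 hcl (ρ / (k + 1)) (by positivity)
    obtain ⟨w, hw⟩ := exists_add_inner_le_of_lt_biconj himg.bddBelow
      (r := g y - 1 / (k + 1)) (by rw [hyg]; linarith [show (0:ℝ) < 1 / (k + 1) by positivity])
    exact ⟨y, hyP, by rwa [dist_comm], w, hw⟩
  choose y hyP hyx w hw using hseq
  have hρk : ∀ k : ℕ, ρ / (k + 1) ≤ ρ := fun k =>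
    div_le_self hρ.le (by linarith [k.cast_nonneg (α := ℝ)])
  have hwb : range w ⊆ Metric.closedBall 0 ((M - m + 1) / ρ) := by
    rintro _ ⟨k, rfl⟩
    have hsub : Metric.closedBall (y k) ρ ⊆ P := (Metric.closedBall_subset_closedBall'
      (by linarith [hyx k, hρk k])).trans hball
    have := mul_norm_le_of_add_inner_le hρ.le hsub (fun z hz => hM (mem_image_of_mem g hz)) (hw k)
    have hk : 1 / ((k : ℝ) + 1) ≤ 1 := div_le_one_of_le₀ (by linarith [k.cast_nonneg (α := ℝ)])
      (by positivity)
    rw [mem_closedBall_zero_iff, le_div_iff₀ hρ]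
    linarith [hm (mem_image_of_mem g (hyP k))]
  refine subdiff_nonempty_of_tendsto hg (interior_subset hx) hyP ?_
    tendsto_one_div_add_atTop_nhds_zero_nat (Metric.isBounded_closedBall.subset hwb) hw
  refine tendsto_iff_dist_tendsto_zero.2 <| squeeze_zero (fun _ => dist_nonneg)
    (fun k => (hyx k).le) ?_
  simpa only [mul_one_div, mul_zero] using tendsto_one_div_add_atTop_nhds_zero_nat.const_mul ρ

end Subgradients

section LocalSupport

variable {n : ℕ} {P : Set (E n)} {x : E n}

theorem add_inner_gradient_lt_of_hessian_pos (hP : Convex ℝ P) {f : E n → ℝ}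
    (hf : ContDiffOn ℝ 2 f (interior P)) (hfc : ContinuousOn f P)
    (hfH : ∀ p ∈ interior P, ∀ v ≠ 0, 0 < ⟪fderiv ℝ (gradient f) p v, v⟫)
    (hx : x ∈ interior P) {z : E n} (hz : z ∈ P) (hne : z ≠ x) :
    f x + ⟪gradient f x, z - x⟫ < f z := by
  have hseg := hP.openSegment_interior_closure_subset_interior hx (subset_closure hz)
  exact add_inner_gradient_lt_of_hessian_pos_on_openSegment
    ((hf.contDiffAt (isOpen_interior.mem_nhds hx)).differentiableAt two_ne_zero)
    (hfc.mono (hP.segment_subset (interior_subset hx) hz))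
    (fun _ hp => hf.contDiffAt (isOpen_interior.mem_nhds (hseg hp)))
    (fun p hp => hfH p (hseg hp) _ (sub_ne_zero.2 hne))

theorem gradient_mem_subdiff_of_hessian_pos (hP : Convex ℝ P) {f : E n → ℝ}
    (hf : ContDiffOn ℝ 2 f (interior P)) (hfc : ContinuousOn f P)
    (hfH : ∀ p ∈ interior P, ∀ v ≠ 0, 0 < ⟪fderiv ℝ (gradient f) p v, v⟫)
    (hx : x ∈ interior P) : gradient f x ∈ subdiff P f x := by
  intro z hz
  rcases eq_or_ne z x with rfl | hne
  · simp
  · exact (add_inner_gradient_lt_of_hessian_pos hP hf hfc hfH hx hz hne).le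

theorem exists_tangent_gap_of_hessian_pos (hPc : IsCompact P) (hP : Convex ℝ P) {f : E n → ℝ}
    (hf : ContDiffOn ℝ 2 f (interior P)) (hfc : ContinuousOn f P)
    (hfH : ∀ p ∈ interior P, ∀ v ≠ 0, 0 < ⟪fderiv ℝ (gradient f) p v, v⟫)
    (hx : x ∈ interior P) {ρ : ℝ} (hρ : 0 < ρ) :
    ∃ δ > 0, ∀ z ∈ P, ρ ≤ dist z x → f x + ⟪gradient f x, z - x⟫ + δ ≤ f z := by
  have hfar : IsClosed {z : E n | ρ ≤ dist z x} :=
    isClosed_le continuous_const (continuous_id.dist continuous_const)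
  obtain ⟨δ, hδ, hδq⟩ := (hPc.inter_right hfar).exists_forall_le'
    (f := fun z => f z - f x - ⟪gradient f x, z - x⟫) (a := 0)
    ((hfc.sub continuousOn_const).sub (by fun_prop) |>.mono inter_subset_left)
    fun z ⟨hz, hzx⟩ => by
      have hne : z ≠ x := by
        rintro rfl
        have : ρ ≤ dist z z := hzx
        rw [dist_self] at this
        linarith
      linarith [add_inner_gradient_lt_of_hessian_pos hP hf hfc hfH hx hz hne]
  exact ⟨δ, hδ, fun z hz hzx => by linarith [hδq z ⟨hz, hzx⟩]⟩

theorem eventually_gradient_mem_subdiff (hPb : Bornology.IsBounded P) {ψ : E n → ℝ}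
    {ρ δ : ℝ} (hρ : 0 < ρ) (hδ : 0 < δ)
    (hψ : ∀ p ∈ Metric.closedBall x ρ, ContDiffAt ℝ 2 ψ p)
    (hH : ∀ p ∈ Metric.closedBall x ρ, ∀ v, 0 ≤ ⟪fderiv ℝ (gradient ψ) p v, v⟫)
    (hgap : ∀ z ∈ P, ρ ≤ dist z x → ψ x + ⟪gradient ψ x, z - x⟫ + δ ≤ ψ z) :
    ∀ᶠ y in 𝓝 x, gradient ψ y ∈ subdiff P ψ y := by
  obtain ⟨R, hR⟩ := hPb.subset_closedBall x
  have hψx := hψ x (Metric.mem_closedBall_self hρ.le)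
  have hgradx := hψx.differentiableAt_gradient.continuousAt
  set err : E n → ℝ := fun y =>
    |ψ y - ψ x - ⟪gradient ψ x, y - x⟫| + (R + ρ) * ‖gradient ψ y - gradient ψ x‖
  have herr : ContinuousAt err x := by
    have := hψx.continuousAt
    fun_prop
  filter_upwards [herr.eventually_lt continuousAt_const (by simpa [err] using hδ),
    Metric.ball_mem_nhds x hρ] with y hy hyx z hz
  by_cases hzx : z ∈ Metric.closedBall x ρ
  · have hseg := (convex_closedBall x ρ).segment_subset (Metric.ball_subset_closedBall hyx) hzx
    exact add_inner_gradient_le_of_hessian_nonneg_on_segment (fun p hp => hψ p (hseg hp))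
      (fun p hp => hH p (hseg hp) _)
  · -- far from `x`, the tangent plane at `y` differs from the one at `x` by at most `err y < δ`
    have hfar : ρ ≤ dist z x := (not_le.1 hzx).le
    have hzy : ‖z - y‖ ≤ R + ρ := by
      rw [← dist_eq_norm]
      linarith [dist_triangle z x y, Metric.mem_closedBall.1 (hR hz), dist_comm x y,
        (Metric.mem_ball.1 hyx).le]
    have h1 : ⟪gradient ψ y - gradient ψ x, z - y⟫
        ≤ (R + ρ) * ‖gradient ψ y - gradient ψ x‖ :=
      (real_inner_le_norm _ _).trans (by rw [mul_comm]; gcongr)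
    have h2 := le_abs_self (ψ y - ψ x - ⟪gradient ψ x, y - x⟫)
    have hsplit : ⟪gradient ψ y, z - y⟫ = ⟪gradient ψ y - gradient ψ x, z - y⟫
        + ⟪gradient ψ x, z - x⟫ - ⟪gradient ψ x, y - x⟫ := by
      simp only [inner_sub_left, inner_sub_right]; ring
    linarith [hgap z hz hfar]

end LocalSupport

section ConvexCombination

variable {n : ℕ} {P : Set (E n)} {x : E n}

theorem eventually_subdiff_nonempty_of_convex_combination (hPc : IsCompact P)
    (hP : Convex ℝ P) {f φ : E n → ℝ} (hf : ContDiffOn ℝ 2 f (interior P))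
    (hφ : ContDiffOn ℝ 2 φ (interior P)) (hfc : ContinuousOn f P)
    (hfH : ∀ p ∈ interior P, ∀ v ≠ 0, 0 < ⟪fderiv ℝ (gradient f) p v, v⟫)
    {t : ℝ} (ht₀ : 0 ≤ t) (ht₁ : t < 1) (hx : x ∈ interior P) (hφx : (subdiff P φ x).Nonempty) :
    ∀ᶠ y in 𝓝 x, (subdiff P (fun z => t * φ z + (1 - t) * f z) y).Nonempty := by
  obtain ⟨w, hw⟩ := hφx
  set ψ : E n → ℝ := fun z => t * φ z + (1 - t) * f z
  have hf' : ∀ p ∈ interior P, ContDiffAt ℝ 2 f p :=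
    fun p hp => hf.contDiffAt (isOpen_interior.mem_nhds hp)
  have hφ' : ∀ p ∈ interior P, ContDiffAt ℝ 2 φ p :=
    fun p hp => hφ.contDiffAt (isOpen_interior.mem_nhds hp)
  have hψ' : ∀ p ∈ interior P, ContDiffAt ℝ 2 ψ p := fun p hp =>
    (contDiffAt_const.mul (hφ' p hp)).add (contDiffAt_const.mul (hf' p hp))
  set q : E n → ℝ := fun z => f z - f x - ⟪gradient f x, z - x⟫
  have hq₀ : ∀ z ∈ P, 0 ≤ q z := fun z hz => by
    linarith [gradient_mem_subdiff_of_hessian_pos hP hf hfc hfH hx z hz]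
  have hψq : ∀ z ∈ P, ψ x + ⟪t • w + (1 - t) • gradient f x, z - x⟫ + (1 - t) * q z ≤ ψ z := by
    intro z hz
    have := mul_le_mul_of_nonneg_left (hw z hz) ht₀
    simp only [ψ, q, inner_add_left, real_inner_smul_left]
    linarith
  have hgrad : gradient ψ x = t • w + (1 - t) • gradient f x :=
    gradient_eq_of_mem_subdiff hx ((hψ' x hx).differentiableAt two_ne_zero) fun z hz => by
      nlinarith [hψq z hz, hq₀ z hz]
  have hHx : ∀ v ≠ 0, 0 < ⟪fderiv ℝ (gradient ψ) x v, v⟫ := by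
    intro v hv
    have hφH := inner_hessian_nonneg_of_mem_subdiff hx (hφ' x hx) hw v
    rw [hessian_const_mul_add_const_mul t (1 - t) (hφ' x hx) (hf' x hx)]
    simp only [add_apply, smul_apply, inner_add_left, real_inner_smul_left]
    nlinarith [hfH x hx v hv]
  have hHcont : ContinuousAt (fderiv ℝ (gradient ψ)) x :=
    ((hψ' x hx).contDiffAt_gradient (m := 1) (by norm_num)).continuousAt_fderiv one_ne_zero
  have hint : ∀ᶠ p in 𝓝 x, p ∈ interior P := isOpen_interior.mem_nhds hx
  obtain ⟨ρ, hρ, hρP⟩ := Metric.nhds_basis_closedBall.eventually_iff.1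
    (hint.and (eventually_inner_nonneg_of_continuousAt hHcont hHx))
  obtain ⟨δ, hδ, hδq⟩ := exists_tangent_gap_of_hessian_pos hPc hP hf hfc hfH hx hρ
  refine (eventually_gradient_mem_subdiff hPc.isBounded hρ (mul_pos (sub_pos.2 ht₁) hδ)
    (fun p hp => hψ' p (hρP hp).1) (fun p hp => (hρP hp).2) fun z hz hzx => ?_).mono
    fun y hy => ⟨_, hy⟩
  rw [hgrad]
  nlinarith [hψq z hz, hδq z hz hzx]

end ConvexCombination

section Polytope

variable {n d : ℕ}

theorem continuous_uG (v : Fin d → E n) (lam : Fin d → ℝ) : Continuous (uG v lam) :=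
  continuous_finsetSum _ fun k _ => Real.continuous_mul_log.comp
    ((continuous_id.inner continuous_const).sub continuous_const : Continuous (lfun v lam k))

theorem convex_Pset (v : Fin d → E n) (lam : Fin d → ℝ) : Convex ℝ (Pset v lam) := by
  intro x hx y hy a b ha hb hab k
  have hlin : lfun v lam k (a • x + b • y) = a * lfun v lam k x + b * lfun v lam k y := by
    simp only [lfun, inner_add_left, real_inner_smul_left]
    linear_combination lam k * hab
  rw [hlin]
  exact add_nonneg (mul_nonneg ha (hx k)) (mul_nonneg hb (hy k))

end Polytope

def nonConvexLocus {n : ℕ} (P : Set (E n)) (g : E n → ℝ) : Set (E n) :=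
  {y ∈ P | g y ≠ biconj P g y}

section NonConvexLocus

variable {n : ℕ} {P : Set (E n)} {f g : E n → ℝ}

theorem closure_nonConvexLocus_diff_frontier_subset_interior (hPc : IsCompact P)
    (hP : Convex ℝ P) (hf : ContDiffOn ℝ 2 f (interior P)) (hg : ContDiffOn ℝ 2 g (interior P))
    (hfc : ContinuousOn f P) (hgc : ContinuousOn g P)
    (hfH : ∀ p ∈ interior P, ∀ v ≠ 0, 0 < ⟪fderiv ℝ (gradient f) p v, v⟫)
    {s₁ s₂ : ℝ} (hs₁ : 0 ≤ s₁) (hs : s₁ < s₂) :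
    closure (nonConvexLocus P fun z => f z + s₁ * g z) \ frontier P
      ⊆ interior (nonConvexLocus P fun z => f z + s₂ * g z) := by
  rintro x ⟨hxcl, hxfr⟩
  have hxP : x ∈ P := closure_minimal (sep_subset _ _) hPc.isClosed hxcl
  have hxI : x ∈ interior P := by
    rw [hPc.isClosed.frontier_eq] at hxfr
    by_contra h
    exact hxfr ⟨hxP, h⟩
  by_contra hx₂
  set φ : E n → ℝ := fun z => f z + s₂ * g z
  have hcl : x ∈ closure {y ∈ P | biconj P φ y = φ y} := by
    have hx₂' : x ∈ closure (nonConvexLocus P φ)ᶜ := by rwa [closure_compl]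
    refine closure_mono ?_ (isOpen_interior.inter_closure ⟨hxI, hx₂'⟩)
    rintro y ⟨hyI, hy⟩
    exact ⟨interior_subset hyI, not_not.1 fun h => hy ⟨interior_subset hyI, Ne.symm h⟩⟩
  have hs₂ : 0 < s₂ := hs₁.trans_lt hs
  have hcomb : (fun z => f z + s₁ * g z) = fun z => s₁ / s₂ * φ z + (1 - s₁ / s₂) * f z := by
    funext z
    field_simp
    ring
  have hev := eventually_subdiff_nonempty_of_convex_combination hPc hP hf
    (hf.add (contDiffOn_const.mul hg)) hfc hfH (div_nonneg hs₁ hs₂.le) ((div_lt_one hs₂).2 hs) hxI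
    (subdiff_nonempty_of_mem_closure hPc (hfc.add (continuousOn_const.mul hgc)) hxI hcl)
  rw [← hcomb] at hev
  obtain ⟨y, ⟨hyP, hne⟩, w, hw⟩ := ((mem_closure_iff_frequently.1 hxcl).and_eventually hev).exists
  exact hne (biconj_eq_of_mem_subdiff hyP hw).symm

theorem iUnion_nonConvexLocus_add_mul (hPc : IsCompact P) (hP : Convex ℝ P) {x₀ : E n}
    (hx₀ : x₀ ∈ interior P) (hfc : ContinuousOn f P) (hgc : ContinuousOn g P)
    (hf : ∀ p ∈ interior P, (subdiff P f p).Nonempty) :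
    ⋃ s ∈ Ioi (0:ℝ), nonConvexLocus P (fun z => f z + s * g z) = nonConvexLocus P g := by
  have hbdd : ∀ {h : E n → ℝ}, ContinuousOn h P → BddBelow (h '' P) :=
    fun hh => (hPc.image_of_continuousOn hh).bddBelow
  have hfgc : ∀ s : ℝ, ContinuousOn (fun z => f z + s * g z) P :=
    fun s => hfc.add (continuousOn_const.mul hgc)
  ext y
  simp only [mem_iUnion, mem_Ioi, exists_prop]
  constructor
  · rintro ⟨s, hs, hyP, hne⟩
    refine ⟨hyP, fun hgy => hne (le_antisymm ?_ (biconj_le_self_of_bddBelow hyP (hbdd (hfgc s))))⟩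
    calc f y + s * g y = biconj P f y + s * biconj P g y := by
          rw [biconj_eq_self_of_subdiff_nonempty hP hfc hx₀ hf hyP, ← hgy]
      _ ≤ _ := add_mul_biconj_le_biconj hyP (hbdd hfc) (hbdd hgc) hs.le
  · rintro ⟨hyP, hne⟩
    obtain ⟨M, hM⟩ := (hPc.image_of_continuousOn hfc).bddAbove
    have hfy : f y ≤ M := hM (mem_image_of_mem f hyP)
    have hgap : 0 < g y - biconj P g y :=
      sub_pos.2 (lt_of_le_of_ne (biconj_le_self_of_bddBelow hyP (hbdd hgc)) (Ne.symm hne))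
    -- for large `s` the gap `s (g y - g** y)` exceeds the oscillation of `f`
    set s := (M - f y) / (g y - biconj P g y) + 1
    have hs : 0 < s := by positivity
    have hsgap : s * (g y - biconj P g y) = M - f y + (g y - biconj P g y) := by
      rw [add_mul, div_mul_cancel₀ _ hgap.ne', one_mul]
    refine ⟨s, hs, hyP, (ne_of_lt ?_).symm⟩
    calc biconj P (fun z => f z + s * g z) y ≤ M + s * biconj P g y :=
          biconj_add_mul_le hyP hs (hbdd (hfgc s)) fun z hz => hM (mem_image_of_mem f hz)
      _ < f y + s * g y := by linarith

end NonConvexLocus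

theorem As_monotone_and_limit_general
    {n d : ℕ}
    (v : Fin d → E n) (lam : Fin d → ℝ) (P : Set (E n))
    (hP : GoodPolytope v lam P)
    (u₀ udot : E n → ℝ) (hD : GoodData v lam P u₀ udot)
    (u : ℝ → E n → ℝ) (hu : ∀ s y, u s y = u₀ y + s * udot y)
    (A : ℝ → Set (E n)) (hA : ∀ s, A s = {y ∈ P | u s y ≠ biconj P (u s) y}) :
    (∀ s₁ s₂ : ℝ, 0 < s₁ → s₁ < s₂ → closure (A s₁) \ frontier P ⊆ interior (A s₂)) ∧
    (⋃ s ∈ Ioi (0:ℝ), A s) = {y ∈ P | udot y ≠ biconj P udot y} := by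
  obtain ⟨hPeq, hPc, ⟨x₀, hx₀⟩, -, -⟩ := hP
  obtain ⟨⟨U₀, -, hPU₀, F, hF, hu₀F⟩, -, hu₀, hpos, U, -, hPU, hudot⟩ := hD
  have hPcv : Convex ℝ P := hPeq ▸ convex_Pset v lam
  have hu₀c : ContinuousOn u₀ P :=
    ((continuous_uG v lam).continuousOn.add (hF.continuousOn.mono hPU₀)).congr hu₀F
  have hudc : ContinuousOn udot P := hudot.continuousOn.mono hPU
  have hu₀' : ContDiffOn ℝ 2 u₀ (interior P) := hu₀.of_le (WithTop.coe_le_coe.2 le_top)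
  have hudot' : ContDiffOn ℝ 2 udot (interior P) :=
    (hudot.mono (interior_subset.trans hPU)).of_le (WithTop.coe_le_coe.2 le_top)
  obtain rfl : u = fun s y => u₀ y + s * udot y := funext₂ hu
  obtain rfl : A = fun s => nonConvexLocus P fun y => u₀ y + s * udot y := funext hA
  exact ⟨fun s₁ s₂ hs₁ hs => closure_nonConvexLocus_diff_frontier_subset_interior hPc hPcv hu₀'
      hudot' hu₀c hudc hpos hs₁.le hs,
    iUnion_nonConvexLocus_add_mul hPc hPcv hx₀ hu₀c hudc fun p hp =>
      ⟨_, gradient_mem_subdiff_of_hessian_pos hPcv hu₀' hu₀c hpos hp⟩⟩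

/-- For `0 < s₁ < s₂`, `closure(A_{s₁}) ∖ ∂P ⊆ int(A_{s₂})`; moreover
`⋃_{s>0} A_s = {y ∈ P : u̇₀(y) ≠ (u̇₀)**(y)}`. -/
theorem As_monotone_and_limit
    {n d : ℕ} (hn : 1 ≤ n)
    (v : Fin d → E n) (lam : Fin d → ℝ) (P : Set (E n))
    (hP : GoodPolytope v lam P)
    (u₀ udot : E n → ℝ) (hD : GoodData v lam P u₀ udot)
    (u : ℝ → E n → ℝ) (hu : ∀ s y, u s y = u₀ y + s * udot y)
    (A : ℝ → Set (E n)) (hA : ∀ s, A s = {y ∈ P | u s y ≠ biconj P (u s) y}) :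
    (∀ s₁ s₂ : ℝ, 0 < s₁ → s₁ < s₂ → closure (A s₁) \ frontier P ⊆ interior (A s₂)) ∧
    (⋃ s ∈ Ioi (0:ℝ), A s) = {y ∈ P | udot y ≠ biconj P udot y} :=
  As_monotone_and_limit_general v lam P hP u₀ udot hD u hu A hA
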